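/- Let ν ≥ 0 and let w : ℤ × ℝ → ℂ be measurable. Define W(t,k,η) = w(k, η + k·t) · exp(−ν ∫₀ᵗ (k² + (η + k·s)²) ds) and Ψ(t,k,η) = W(t,k,η)/(k² + η²). Then for every t ≥ 0, (1 + t²)² · ∑_{k ≠ 0} ∫_ℝ |Ψ(t,k,η)|² dη ≤ 16 · ∑_{k ≠ 0} ∫_ℝ (1 + η²)² |w(k,η)|² dη (as an inequality of extended nonnegative reals). -/

import Mathlib

/-!
The transport `η ↦ η + k t` moves the weight `1 + t²` onto the Fourier variable: for `|k| ≥ 1`,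
`1 + t² ≤ 2 (k² + η²) (1 + (η + k t)²)`, because `k t` is the difference of `η + k t` and `η`.
Together with the viscous factor being at most `1`, this gives
`(1 + t²) |Ψ(t,k,η)| ≤ 2 (1 + (η + k t)²) |w(k, η + k t)|`, and the translation `η ↦ η + k t`
preserves Lebesgue measure.
-/

open MeasureTheory
open scoped ENNReal

lemma one_add_sq_le_two_mul_mul {k t η : ℝ} (hk : 1 ≤ k ^ 2) :
    1 + t ^ 2 ≤ 2 * (k ^ 2 + η ^ 2) * (1 + (η + k * t) ^ 2) := by
  have hkt : t ^ 2 ≤ (k * t) ^ 2 := by nlinarith [sq_nonneg t]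
  have hshift : (k * t) ^ 2 ≤ 2 * (η + k * t) ^ 2 + 2 * η ^ 2 := by
    nlinarith [sq_nonneg (η + k * t + η)]
  nlinarith [mul_nonneg (sub_nonneg.2 hk) (sq_nonneg (η + k * t)), sq_nonneg η,
    mul_nonneg (sq_nonneg η) (sq_nonneg (η + k * t))]

lemma exp_neg_mul_integral_le_one {ν t : ℝ} (hν : 0 ≤ ν) (ht : 0 ≤ t) {f : ℝ → ℝ}
    (hf : ∀ s, 0 ≤ f s) : Real.exp (-ν * ∫ s in (0 : ℝ)..t, f s) ≤ 1 :=
  Real.exp_le_one_iff.2 <|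
    mul_nonpos_of_nonpos_of_nonneg (neg_nonpos.2 hν)
      (intervalIntegral.integral_nonneg ht fun s _ => hf s)

lemma one_add_sq_mul_norm_couette_le {ν t k : ℝ} (hν : 0 ≤ ν) (ht : 0 ≤ t) (hk : 1 ≤ k ^ 2)
    (η : ℝ) (a : ℂ) :
    (1 + t ^ 2) * ‖a * (Real.exp (-ν * ∫ s in (0 : ℝ)..t, (k ^ 2 + (η + k * s) ^ 2)) : ℂ) /
        ((k ^ 2 + η ^ 2 : ℝ) : ℂ)‖ ≤ 2 * ((1 + (η + k * t) ^ 2) * ‖a‖) := by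
  set E := Real.exp (-ν * ∫ s in (0 : ℝ)..t, (k ^ 2 + (η + k * s) ^ 2))
  have hE : E ≤ 1 := exp_neg_mul_integral_le_one hν ht fun s => by positivity
  have hK : 0 < k ^ 2 + η ^ 2 := by positivity
  rw [norm_div, norm_mul, Complex.norm_real, Complex.norm_real, Real.norm_of_nonneg hK.le,
    Real.norm_of_nonneg (Real.exp_pos _).le, ← mul_div_assoc, div_le_iff₀ hK]
  calc (1 + t ^ 2) * (‖a‖ * E) ≤ (1 + t ^ 2) * ‖a‖ := by
        gcongr
        exact mul_le_of_le_one_right (norm_nonneg a) hE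
    _ ≤ 2 * (k ^ 2 + η ^ 2) * (1 + (η + k * t) ^ 2) * ‖a‖ := by
        gcongr
        exact one_add_sq_le_two_mul_mul hk
    _ = _ := by ring

lemma ofReal_sq_mul_enorm_sq {E : Type*} [SeminormedAddGroup E] (a : ℝ) (x : E) :
    ENNReal.ofReal (a ^ 2) * ‖x‖ₑ ^ 2 = ENNReal.ofReal ((a * ‖x‖) ^ 2) := by
  rw [← ofReal_norm, ← ENNReal.ofReal_pow (norm_nonneg x), ← ENNReal.ofReal_mul (sq_nonneg a),
    mul_pow]

lemma ofReal_sq_mul_enorm_sq_le_sixteen_mul {E F : Type*} [SeminormedAddGroup E]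
    [SeminormedAddGroup F] {a b : ℝ} (ha : 0 ≤ a) (hb : 0 ≤ b) {x : E} {y : F}
    (h : a * ‖x‖ ≤ 2 * (b * ‖y‖)) :
    ENNReal.ofReal (a ^ 2) * ‖x‖ₑ ^ 2 ≤ 16 * (ENNReal.ofReal (b ^ 2) * ‖y‖ₑ ^ 2) := by
  rw [ofReal_sq_mul_enorm_sq, ofReal_sq_mul_enorm_sq,
    show (16 : ℝ≥0∞) = ENNReal.ofReal 16 by norm_num, ← ENNReal.ofReal_mul (by norm_num)]
  gcongr
  have hby : 0 ≤ b * ‖y‖ := by positivity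
  nlinarith [mul_nonneg ha (norm_nonneg x)]

theorem stmt_6_general (ν : ℝ) (hν : 0 ≤ ν) (w : ℤ × ℝ → ℂ)
    (W Ψ : ℝ → ℤ → ℝ → ℂ)
    (hW : ∀ (t : ℝ) (k : ℤ) (η : ℝ), W t k η =
      w (k, η + (k : ℝ) * t) *
        (Real.exp (-ν * ∫ s in (0:ℝ)..t, ((k : ℝ) ^ 2 + (η + (k : ℝ) * s) ^ 2)) : ℂ))
    (hΨ : ∀ (t : ℝ) (k : ℤ) (η : ℝ), Ψ t k η =
      W t k η / (((k : ℝ) ^ 2 + η ^ 2 : ℝ) : ℂ)) :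
    ∀ t : ℝ, 0 ≤ t →
      ENNReal.ofReal ((1 + t ^ 2) ^ 2) *
          ∑' k : {k : ℤ // k ≠ 0}, ∫⁻ η : ℝ, (‖Ψ t (k : ℤ) η‖₊ : ℝ≥0∞) ^ 2
        ≤ 16 * ∑' k : {k : ℤ // k ≠ 0},
            ∫⁻ η : ℝ, ENNReal.ofReal ((1 + η ^ 2) ^ 2) * (‖w ((k : ℤ), η)‖₊ : ℝ≥0∞) ^ 2 := by
  intro t ht
  simp only [← enorm_eq_nnnorm]
  rw [← ENNReal.tsum_mul_left, ← ENNReal.tsum_mul_left]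
  refine ENNReal.tsum_le_tsum fun ⟨k, hk⟩ => ?_
  have hk2 : (1 : ℝ) ≤ (k : ℝ) ^ 2 := mod_cast (one_le_sq_iff_one_le_abs _).mpr (Int.one_le_abs hk)
  rw [← lintegral_const_mul' _ _ ENNReal.ofReal_ne_top,
    ← lintegral_const_mul' _ _ (by norm_num)]
  refine (lintegral_mono fun η => ?_).trans_eq (lintegral_add_right_eq_self _ ((k : ℝ) * t))
  refine ofReal_sq_mul_enorm_sq_le_sixteen_mul (by positivity) (by positivity) ?_
  rw [hΨ, hW]
  exact one_add_sq_mul_norm_couette_le hν ht hk2 η _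

/-- `L²` inviscid damping for the stream function of the linearized Couette flow:
`(1 + t²)² ∑_{k ≠ 0} ∫ |Ψ(t,k,η)|² dη ≤ 16 ∑_{k ≠ 0} ∫ (1 + η²)² |w(k,η)|² dη`. -/
theorem stmt_6 (ν : ℝ) (hν : 0 ≤ ν) (w : ℤ × ℝ → ℂ) (hw : Measurable w)
    (W Ψ : ℝ → ℤ → ℝ → ℂ)
    (hW : ∀ (t : ℝ) (k : ℤ) (η : ℝ), W t k η =
      w (k, η + (k : ℝ) * t) *
        (Real.exp (-ν * ∫ s in (0:ℝ)..t, ((k : ℝ) ^ 2 + (η + (k : ℝ) * s) ^ 2)) : ℂ))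
    (hΨ : ∀ (t : ℝ) (k : ℤ) (η : ℝ), Ψ t k η =
      W t k η / (((k : ℝ) ^ 2 + η ^ 2 : ℝ) : ℂ)) :
    ∀ t : ℝ, 0 ≤ t →
      ENNReal.ofReal ((1 + t ^ 2) ^ 2) *
          ∑' k : {k : ℤ // k ≠ 0}, ∫⁻ η : ℝ, (‖Ψ t (k : ℤ) η‖₊ : ℝ≥0∞) ^ 2
        ≤ 16 * ∑' k : {k : ℤ // k ≠ 0},
            ∫⁻ η : ℝ, ENNReal.ofReal ((1 + η ^ 2) ^ 2) * (‖w ((k : ℤ), η)‖₊ : ℝ≥0∞) ^ 2 :=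
  stmt_6_general ν hν w W Ψ hW hΨ
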